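/- arXiv:2305.15738 — 3 statements merged into one kernel-verified Lean document; each statement's English description precedes it below -/
import Mathlib

section
/- Let G be a graph, S a subset of vertices, and C a connected component of G with more than 3n/4 vertices, where n = |V(G)|. If no connected component of G - S has more than n/2 vertices, then for two vertices a, b chosen independently and uniformly at random from C, the probability that a and b lie in different connected components of G - S (or at least one of them lies in S) is at least 1/3. -/
/-!
Each vertex of `C` outside `S` lies in a component of `G - S` with at most `n/2` vertices, so
at most `|C| n / 2` ordered pairs of `C` stay connected in `G - S`. Since `n < 4|C|/3`, this is
less than `2|C|²/3`, leaving at least `|C|²/3` separated pairs.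
-/

/-- The graph obtained from `G` by deleting the vertices of `S`
(deleted vertices become isolated). -/
def removeVerts {V : Type*} (G : SimpleGraph V) (S : Set V) : SimpleGraph V where
  Adj u w := G.Adj u w ∧ u ∉ S ∧ w ∉ S
  symm := ⟨fun u w h => ⟨h.1.symm, h.2.2, h.2.1⟩⟩
  loopless := ⟨fun u h => G.loopless.irrefl u h.1⟩

theorem Set.ncard_le_mul_ncard_of_fiber_le {α β : Type*} [Finite α] [Finite β]
    {P : Set (α × β)} {C : Set α} (hPC : ∀ p ∈ P, p.1 ∈ C) (k : ℕ)
    (hk : ∀ a ∈ C, {b | (a, b) ∈ P}.ncard ≤ k) : P.ncard ≤ k * C.ncard := by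
  classical
  have := Fintype.ofFinite α
  have := Fintype.ofFinite β
  simp_rw [Set.ncard_eq_toFinset_card']
  refine Finset.card_le_mul_card_image_of_maps_to (f := Prod.fst) (by simpa using hPC) k ?_
  intro a ha
  have hfiber : {p ∈ P.toFinset | p.1 = a} =
      {b | (a, b) ∈ P}.toFinset.map ⟨Prod.mk a, Prod.mk_right_injective a⟩ := by
    ext ⟨x, y⟩
    simp only [Finset.mem_filter, Set.mem_toFinset, Finset.mem_map, Set.mem_ofPred_eq,
      Function.Embedding.coeFn_mk, Prod.mk.injEq]
    constructor
    · rintro ⟨hP, rfl⟩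
      exact ⟨y, hP, rfl, rfl⟩
    · rintro ⟨b, hP, rfl, rfl⟩
      exact ⟨hP, rfl⟩
  rw [hfiber, Finset.card_map, ← Set.ncard_eq_toFinset_card']
  exact hk a (by simpa using ha)

theorem two_mul_ncard_reachable_pairs_le {V : Type*} [Fintype V] (H : SimpleGraph V)
    (S C : Set V)
    (hsep : ∀ v : V, v ∉ S → 2 * {u : V | H.Reachable u v}.ncard ≤ Fintype.card V) :
    2 * {p : V × V | p.1 ∈ C ∧ p.2 ∈ C ∧ p.1 ∉ S ∧ p.2 ∉ S ∧ H.Reachable p.1 p.2}.ncard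
      ≤ Fintype.card V * C.ncard := by
  have hfiber : ∀ a ∈ C, {b | (a, b) ∈ {p : V × V | p.1 ∈ C ∧ p.2 ∈ C ∧ p.1 ∉ S ∧ p.2 ∉ S ∧
      H.Reachable p.1 p.2}}.ncard ≤ Fintype.card V / 2 := by
    intro a _
    by_cases haS : a ∈ S
    · simp [haS]
    · calc _ ≤ {u : V | H.Reachable u a}.ncard :=
            Set.ncard_le_ncard fun b hb => hb.2.2.2.2.symm
        _ ≤ Fintype.card V / 2 := by have := hsep a haS; omega
  have := Set.ncard_le_mul_ncard_of_fiber_le (fun p hp => hp.1) _ hfiber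
  calc _ ≤ 2 * (Fintype.card V / 2 * C.ncard) := by omega
    _ ≤ Fintype.card V * C.ncard := by
        rw [← mul_assoc]
        exact Nat.mul_le_mul_right _ (Nat.mul_div_le _ _)

theorem random_pair_separated_with_prob_one_third_general {V : Type*} [Fintype V]
    (G : SimpleGraph V) (S C : Set V)
    (hCbig : 3 * Fintype.card V < 4 * C.ncard)
    (hsep : ∀ v : V, v ∉ S →
      2 * {u : V | (removeVerts G S).Reachable u v}.ncard ≤ Fintype.card V) :
    C.ncard ^ 2 ≤ 3 * {p : V × V | p.1 ∈ C ∧ p.2 ∈ C ∧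
      (p.1 ∈ S ∨ p.2 ∈ S ∨ ¬ (removeVerts G S).Reachable p.1 p.2)}.ncard := by
  set B := {p : V × V | p.1 ∈ C ∧ p.2 ∈ C ∧ p.1 ∉ S ∧ p.2 ∉ S ∧
    (removeVerts G S).Reachable p.1 p.2}
  have hB : 2 * B.ncard ≤ Fintype.card V * C.ncard :=
    two_mul_ncard_reachable_pairs_le _ S C hsep
  have hsplit : {p : V × V | p.1 ∈ C ∧ p.2 ∈ C ∧
      (p.1 ∈ S ∨ p.2 ∈ S ∨ ¬ (removeVerts G S).Reachable p.1 p.2)} = C ×ˢ C \ B := by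
    ext p
    simp only [B, Set.mem_ofPred_eq, Set.mem_sdiff, Set.mem_prod]
    tauto
  have hcount := Set.ncard_sdiff_add_ncard_of_subset (s := B) (t := C ×ˢ C)
    fun p hp => ⟨hp.1, hp.2.1⟩
  rw [Set.ncard_prod, ← hsplit] at hcount
  have := Nat.mul_le_mul_right C.ncard hCbig
  nlinarith

/-- If `C` is a connected component of `G` with more than `3n/4` vertices and no component
of `G - S` has more than `n/2` vertices, then for `a, b` chosen uniformly at random from
`C`, the probability that `a` and `b` lie in different components of `G - S` (or at least
one of them lies in `S`) is at least `1/3`; stated by counting pairs. -/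
theorem random_pair_separated_with_prob_one_third {V : Type*} [Fintype V]
    (G : SimpleGraph V) (S C : Set V)
    (hC : ∃ v : V, C = {u : V | G.Reachable u v})
    (hCbig : 3 * Fintype.card V < 4 * C.ncard)
    (hsep : ∀ v : V, v ∉ S →
      2 * {u : V | (removeVerts G S).Reachable u v}.ncard ≤ Fintype.card V) :
    C.ncard ^ 2 ≤ 3 * {p : V × V | p.1 ∈ C ∧ p.2 ∈ C ∧
      (p.1 ∈ S ∨ p.2 ∈ S ∨ ¬ (removeVerts G S).Reachable p.1 p.2)}.ncard :=
  random_pair_separated_with_prob_one_third_general G S C hCbig hsep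
end

section
/- Let (H, η) be an extended strip decomposition of a graph G and let (A, B) be a separation in H. Define X = ⋃_{x ∈ A ∩ B} ⋃_{y ∈ N_H(x)} η(xy, x). Then every connected component of G - X is contained in one of: the preimage of A \ B, the preimage of B \ A, η(x) for some x ∈ A ∩ B, η(xy) for some edge xy with both endpoints in A, or η(xyz) for some triangle xyz with at least two of its vertices in A ∩ B. -/
/-- A triangle in a graph `H`. -/
def IsTriangle {W : Type*} (H : SimpleGraph W) (x y z : W) : Prop :=
  H.Adj x y ∧ H.Adj y z ∧ H.Adj x z

/-- An extended strip decomposition of the part `U ⊆ V(G)` of a graph `G`, with host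
graph `H`.  `vmap x = η(x)`, `emap x y = η(xy)`, `imap x y = η(xy, x)` and
`tmap x y z = η(xyz)`.  The sets partition `U`, interfaces around a common vertex are
complete to each other, and every edge of `G` inside `U` is of one of the allowed types. -/
structure ExtStripDecomp {V W : Type*} (G : SimpleGraph V) (H : SimpleGraph W)
    (U : Set V) where
  vmap : W → Set V
  emap : W → W → Set V
  imap : W → W → Set V
  tmap : W → W → W → Set V
  emap_symm : ∀ x y, emap x y = emap y x
  tmap_symm₁ : ∀ x y z, tmap x y z = tmap y x z
  tmap_symm₂ : ∀ x y z, tmap x y z = tmap x z y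
  vmap_sub : ∀ x, vmap x ⊆ U
  emap_sub : ∀ x y, emap x y ⊆ U
  tmap_sub : ∀ x y z, tmap x y z ⊆ U
  imap_sub : ∀ x y, imap x y ⊆ emap x y
  emap_empty_of_not_adj : ∀ x y, ¬ H.Adj x y → emap x y = ∅
  tmap_empty_of_not_tri : ∀ x y z, ¬ IsTriangle H x y z → tmap x y z = ∅
  cover : ∀ u ∈ U, (∃ x, u ∈ vmap x) ∨ (∃ x y, u ∈ emap x y) ∨ ∃ x y z, u ∈ tmap x y z
  vmap_disj : ∀ x x', x ≠ x' → Disjoint (vmap x) (vmap x')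
  ve_disj : ∀ x y z, Disjoint (vmap x) (emap y z)
  vt_disj : ∀ x a b c, Disjoint (vmap x) (tmap a b c)
  et_disj : ∀ x y a b c, Disjoint (emap x y) (tmap a b c)
  ee_disj : ∀ x y a b, s(x, y) ≠ s(a, b) → Disjoint (emap x y) (emap a b)
  tt_disj : ∀ x y z a b c, ({x, y, z} : Set W) ≠ {a, b, c} →
    Disjoint (tmap x y z) (tmap a b c)
  interfaces_complete : ∀ x y z, H.Adj x y → H.Adj x z → y ≠ z →
    ∀ u ∈ imap x y, ∀ v ∈ imap x z, G.Adj u v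
  edge_rule : ∀ u v, u ∈ U → v ∈ U → G.Adj u v →
    (∃ x, u ∈ vmap x ∧ v ∈ vmap x) ∨
    (∃ x y, u ∈ emap x y ∧ v ∈ emap x y) ∨
    (∃ x y z, u ∈ tmap x y z ∧ v ∈ tmap x y z) ∨
    (∃ x y z, H.Adj x y ∧ H.Adj x z ∧ u ∈ imap x y ∧ v ∈ imap x z) ∨
    (∃ x y, H.Adj x y ∧
      ((u ∈ imap x y ∧ v ∈ vmap x) ∨ (v ∈ imap x y ∧ u ∈ vmap x))) ∨
    (∃ x y z, (u ∈ tmap x y z ∧ v ∈ imap x y ∧ v ∈ imap y x) ∨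
      (v ∈ tmap x y z ∧ u ∈ imap x y ∧ u ∈ imap y x))

/-- A rigid extended strip decomposition: for every edge `xy` of `H` the sets `η(xy)`,
`η(xy, x)` and `η(xy, y)` are nonempty. -/
def ExtStripDecomp.Rigid {V W : Type*} {G : SimpleGraph V} {H : SimpleGraph W} {U : Set V}
    (D : ExtStripDecomp G H U) : Prop :=
  ∀ x y, H.Adj x y →
    (D.emap x y).Nonempty ∧ (D.imap x y).Nonempty ∧ (D.imap y x).Nonempty

/-- The preimage in `G` of a set `S` of vertices of the host graph `H`: all vertex sets
`η(x)` for `x ∈ S`, all edge sets `η(xy)` with at least one endpoint in `S`, and all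
triangle sets `η(xyz)` with at least two of `x, y, z` in `S`. -/
def ExtStripDecomp.preimg {V W : Type*} {G : SimpleGraph V} {H : SimpleGraph W}
    {U : Set V} (D : ExtStripDecomp G H U) (S : Set W) : Set V :=
  {v | (∃ x ∈ S, v ∈ D.vmap x) ∨
    (∃ x y, H.Adj x y ∧ (x ∈ S ∨ y ∈ S) ∧ v ∈ D.emap x y) ∨
    ∃ x y z, IsTriangle H x y z ∧
      ((x ∈ S ∧ y ∈ S) ∨ (x ∈ S ∧ z ∈ S) ∨ (y ∈ S ∧ z ∈ S)) ∧ v ∈ D.tmap x y z}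

/-! Every vertex of `G` lies in exactly one piece `η(x)`, `η(xy)` or `η(xyz)`, and by the edge
rule an edge of `G` between two different pieces always has an end in an interface `η(pq, p)`.
Deleting `X` removes the interfaces at `A ∩ B`, so a piece indexed inside `A ∩ B` becomes a
union of components of `G - X`. An interface `η(pq, p)` that survives has `p ∉ A ∩ B`, and then
`p` lies on the same side of the separation as every neighbour of `p` in `A \ B` or `B \ A`;
hence the preimages of `A \ B` and of `B \ A` are unions of components as well. -/
def AtLeastTwoIn {W : Type*} (S : Set W) (x y z : W) : Prop :=
  (x ∈ S ∧ y ∈ S) ∨ (x ∈ S ∧ z ∈ S) ∨ (y ∈ S ∧ z ∈ S)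

theorem atLeastTwoIn_or_atLeastTwoIn_compl {W : Type*} (S : Set W) (x y z : W) :
    AtLeastTwoIn S x y z ∨ AtLeastTwoIn Sᶜ x y z := by
  simp only [AtLeastTwoIn, Set.mem_compl_iff]
  tauto

theorem AtLeastTwoIn.left_or_mid {W : Type*} {S : Set W} {x y z : W}
    (h : AtLeastTwoIn S x y z) : x ∈ S ∨ y ∈ S := by
  unfold AtLeastTwoIn at h
  tauto

theorem perm_of_insert_eq_insert {W : Type*} {a b c x y z : W}
    (hxy : x ≠ y) (hxz : x ≠ z) (hyz : y ≠ z) (h : ({a, b, c} : Set W) = {x, y, z}) :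
    (a = x ∧ b = y ∧ c = z) ∨ (a = x ∧ b = z ∧ c = y) ∨ (a = y ∧ b = x ∧ c = z) ∨
      (a = y ∧ b = z ∧ c = x) ∨ (a = z ∧ b = x ∧ c = y) ∨ (a = z ∧ b = y ∧ c = x) := by
  have hmem : ∀ t, t = a ∨ t = b ∨ t = c ↔ t = x ∨ t = y ∨ t = z := fun t => by
    simpa using Set.ext_iff.1 h t
  have := hmem x; have := hmem y; have := hmem z
  have := hmem a; have := hmem b; have := hmem c
  grind

theorem AtLeastTwoIn.of_insert_eq_insert {W : Type*} {S : Set W} {a b c x y z : W}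
    (hxy : x ≠ y) (hxz : x ≠ z) (hyz : y ≠ z) (h : ({a, b, c} : Set W) = {x, y, z})
    (hS : AtLeastTwoIn S a b c) : AtLeastTwoIn S x y z := by
  unfold AtLeastTwoIn at hS ⊢
  rcases perm_of_insert_eq_insert hxy hxz hyz h with
    ⟨rfl, rfl, rfl⟩ | ⟨rfl, rfl, rfl⟩ | ⟨rfl, rfl, rfl⟩ | ⟨rfl, rfl, rfl⟩ | ⟨rfl, rfl, rfl⟩ |
    ⟨rfl, rfl, rfl⟩ <;> tauto

theorem IsTriangle.ne {W : Type*} {H : SimpleGraph W} {x y z : W} (h : IsTriangle H x y z) :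
    x ≠ y ∧ x ≠ z ∧ y ≠ z :=
  ⟨h.1.ne, h.2.2.ne, h.2.1.ne⟩

def IsSeparation {W : Type*} (H : SimpleGraph W) (A B : Set W) : Prop :=
  A ∪ B = Set.univ ∧ ∀ a ∈ A \ B, ∀ b ∈ B \ A, ¬ H.Adj a b

namespace IsSeparation

variable {W : Type*} {H : SimpleGraph W} {A B : Set W}

theorem symm (h : IsSeparation H A B) : IsSeparation H B A :=
  ⟨Set.union_comm A B ▸ h.1, fun b hb a ha hba => h.2 a ha b hb hba.symm⟩

theorem mem_sdiff_or_mem_sdiff (h : IsSeparation H A B) {p : W} (hp : p ∉ A ∩ B) :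
    p ∈ A \ B ∨ p ∈ B \ A := by
  have : p ∈ A ∪ B := h.1 ▸ Set.mem_univ p
  rcases this with hA | hB
  · exact Or.inl ⟨hA, fun hB => hp ⟨hA, hB⟩⟩
  · exact Or.inr ⟨hB, fun hA => hp ⟨hA, hB⟩⟩

theorem mem_sdiff_of_adj (h : IsSeparation H A B) {p q : W} (hpq : H.Adj p q)
    (hq : q ∈ A \ B) (hp : p ∉ A ∩ B) : p ∈ A \ B :=
  (h.mem_sdiff_or_mem_sdiff hp).resolve_right fun hp' => h.2 q hq p hp' hpq.symm

theorem mem_sdiff_of_adj' (h : IsSeparation H A B) {p q : W} (hpq : H.Adj p q)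
    (hq : q ∈ B \ A) (hp : p ∉ A ∩ B) : p ∈ B \ A :=
  h.symm.mem_sdiff_of_adj hpq hq (Set.inter_comm A B ▸ hp)

theorem atLeastTwoIn_sdiff_of_isTriangle (h : IsSeparation H A B) {x y z : W}
    (hxyz : IsTriangle H x y z) (hout : AtLeastTwoIn (A ∩ B)ᶜ x y z) :
    AtLeastTwoIn (A \ B) x y z ∨ AtLeastTwoIn (B \ A) x y z := by
  have same_side : ∀ {p q}, H.Adj p q → p ∉ A ∩ B → q ∉ A ∩ B →
      (p ∈ A \ B ∧ q ∈ A \ B) ∨ (p ∈ B \ A ∧ q ∈ B \ A) := fun hpq hp hq =>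
    (h.mem_sdiff_or_mem_sdiff hp).imp (fun hp' => ⟨hp', h.mem_sdiff_of_adj hpq.symm hp' hq⟩)
      (fun hp' => ⟨hp', h.mem_sdiff_of_adj' hpq.symm hp' hq⟩)
  obtain ⟨hxy, hyz, hxz⟩ := hxyz
  unfold AtLeastTwoIn
  rcases hout with ⟨hx, hy⟩ | ⟨hx, hz⟩ | ⟨hy, hz⟩
  · rcases same_side hxy hx hy with hs | hs <;> tauto
  · rcases same_side hxz hx hz with hs | hs <;> tauto
  · rcases same_side hyz hy hz with hs | hs <;> tauto

end IsSeparation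

def AdjClosed {V : Type*} (G : SimpleGraph V) (P : Set V) : Prop :=
  ∀ ⦃u w⦄, G.Adj u w → u ∈ P → w ∈ P

theorem AdjClosed.setOf_reachable_subset {V : Type*} {G : SimpleGraph V} {P : Set V}
    (hP : AdjClosed G P) {v : V} (hv : v ∈ P) : {u | G.Reachable u v} ⊆ P := by
  intro u hu
  obtain ⟨p⟩ := hu.symm
  clear hu
  induction p with
  | nil => exact hv
  | cons h _ ih => exact ih (hP h hv)

namespace ExtStripDecomp

section Pieces

variable {V W : Type*} {G : SimpleGraph V} {H : SimpleGraph W} {U : Set V}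
  (D : ExtStripDecomp G H U) {u : V}

theorem adj_of_mem_emap {x y : W} (hu : u ∈ D.emap x y) : H.Adj x y := by
  by_contra hxy
  rw [D.emap_empty_of_not_adj x y hxy] at hu
  exact hu

theorem adj_of_mem_imap {x y : W} (hu : u ∈ D.imap x y) : H.Adj x y :=
  D.adj_of_mem_emap (D.imap_sub x y hu)

theorem isTriangle_of_mem_tmap {x y z : W} (hu : u ∈ D.tmap x y z) : IsTriangle H x y z := by
  by_contra hxyz
  rw [D.tmap_empty_of_not_tri x y z hxyz] at hu
  exact hu

theorem eq_of_mem_vmap {x a : W} (hx : u ∈ D.vmap x) (ha : u ∈ D.vmap a) : a = x := by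
  by_contra hax
  exact (D.vmap_disj a x hax).notMem_of_mem_left ha hx

theorem sym2_eq_of_mem_emap {x y a b : W} (hxy : u ∈ D.emap x y) (hab : u ∈ D.emap a b) :
    s(a, b) = s(x, y) := by
  by_contra hne
  exact (D.ee_disj a b x y hne).notMem_of_mem_left hab hxy

theorem emap_eq_of_mem {x y a b : W} (hxy : u ∈ D.emap x y) (hab : u ∈ D.emap a b) :
    D.emap a b = D.emap x y := by
  rcases Sym2.eq_iff.1 (D.sym2_eq_of_mem_emap hxy hab) with ⟨rfl, rfl⟩ | ⟨rfl, rfl⟩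
  · rfl
  · exact D.emap_symm a b

theorem insert_eq_of_mem_tmap {x y z a b c : W} (hxyz : u ∈ D.tmap x y z)
    (habc : u ∈ D.tmap a b c) : ({a, b, c} : Set W) = {x, y, z} := by
  by_contra hne
  exact (D.tt_disj a b c x y z hne).notMem_of_mem_left habc hxyz

theorem tmap_eq_of_mem {x y z a b c : W} (hxyz : u ∈ D.tmap x y z)
    (habc : u ∈ D.tmap a b c) : D.tmap a b c = D.tmap x y z := by
  obtain ⟨hxy, hxz, hyz⟩ := (D.isTriangle_of_mem_tmap hxyz).ne
  have h₁ := D.tmap_symm₁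
  have h₂ := D.tmap_symm₂
  rcases perm_of_insert_eq_insert hxy hxz hyz (D.insert_eq_of_mem_tmap hxyz habc) with
    ⟨rfl, rfl, rfl⟩ | ⟨rfl, rfl, rfl⟩ | ⟨rfl, rfl, rfl⟩ | ⟨rfl, rfl, rfl⟩ | ⟨rfl, rfl, rfl⟩ |
    ⟨rfl, rfl, rfl⟩ <;> grind

theorem mem_preimg_iff_of_mem_vmap {x : W} (hu : u ∈ D.vmap x) (S : Set W) :
    u ∈ D.preimg S ↔ x ∈ S := by
  refine ⟨?_, fun hx => Or.inl ⟨x, hx, hu⟩⟩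
  rintro (⟨a, ha, hua⟩ | ⟨a, b, -, -, hua⟩ | ⟨a, b, c, -, -, hua⟩)
  · exact D.eq_of_mem_vmap hua hu ▸ ha
  · exact absurd hua ((D.ve_disj x a b).notMem_of_mem_left hu)
  · exact absurd hua ((D.vt_disj x a b c).notMem_of_mem_left hu)

theorem mem_preimg_iff_of_mem_emap {x y : W} (hu : u ∈ D.emap x y) (S : Set W) :
    u ∈ D.preimg S ↔ x ∈ S ∨ y ∈ S := by
  refine ⟨?_, fun hxy => Or.inr (Or.inl ⟨x, y, D.adj_of_mem_emap hu, hxy, hu⟩)⟩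
  rintro (⟨a, -, hua⟩ | ⟨a, b, -, hab, hua⟩ | ⟨a, b, c, -, -, hua⟩)
  · exact absurd hu ((D.ve_disj a x y).notMem_of_mem_left hua)
  · rcases Sym2.eq_iff.1 (D.sym2_eq_of_mem_emap hu hua) with ⟨rfl, rfl⟩ | ⟨rfl, rfl⟩
    · exact hab
    · exact hab.symm
  · exact absurd hua ((D.et_disj x y a b c).notMem_of_mem_left hu)

theorem mem_preimg_iff_of_mem_tmap {x y z : W} (hu : u ∈ D.tmap x y z) (S : Set W) :
    u ∈ D.preimg S ↔ AtLeastTwoIn S x y z := by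
  have hxyz := D.isTriangle_of_mem_tmap hu
  refine ⟨?_, fun hS => Or.inr (Or.inr ⟨x, y, z, hxyz, hS, hu⟩)⟩
  rintro (⟨a, -, hua⟩ | ⟨a, b, -, -, hua⟩ | ⟨a, b, c, -, hS, hua⟩)
  · exact absurd hu ((D.vt_disj a x y z).notMem_of_mem_left hua)
  · exact absurd hu ((D.et_disj a b x y z).notMem_of_mem_left hua)
  · obtain ⟨hxy, hxz, hyz⟩ := hxyz.ne
    exact AtLeastTwoIn.of_insert_eq_insert hxy hxz hyz (D.insert_eq_of_mem_tmap hu hua) hS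

end Pieces

variable {V W : Type*} {G : SimpleGraph V} {H : SimpleGraph W}
  (D : ExtStripDecomp G H Set.univ) {T : Set W}

def interfaceAt (T : Set W) : Set V :=
  {u | ∃ x ∈ T, ∃ y, H.Adj x y ∧ u ∈ D.imap x y}

theorem mem_interfaceAt {u : V} {x y : W} (hu : u ∈ D.imap x y) (hx : x ∈ T) :
    u ∈ D.interfaceAt T :=
  ⟨x, hx, y, D.adj_of_mem_imap hu, hu⟩

theorem adjClosed_vmap {x : W} (hx : x ∈ T) :
    AdjClosed (removeVerts G (D.interfaceAt T)) (D.vmap x) := by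
  rintro u w ⟨huw, -, hwX⟩ hu
  have not_emap : ∀ {a b}, u ∉ D.emap a b := (D.ve_disj x _ _).notMem_of_mem_left hu
  rcases D.edge_rule u w trivial trivial huw with
    ⟨a, hua, hwa⟩ | ⟨a, b, hua, -⟩ | ⟨a, b, c, hua, -⟩ | ⟨a, b, c, -, -, hua, -⟩ |
    ⟨a, b, -, ⟨hua, -⟩ | ⟨hwa, hua⟩⟩ | ⟨a, b, c, ⟨hua, -⟩ | ⟨-, hua, -⟩⟩
  · exact D.eq_of_mem_vmap hu hua ▸ hwa
  · exact absurd hua not_emap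
  · exact absurd hua ((D.vt_disj x a b c).notMem_of_mem_left hu)
  · exact absurd (D.imap_sub _ _ hua) not_emap
  · exact absurd (D.imap_sub _ _ hua) not_emap
  · exact absurd (D.mem_interfaceAt hwa (D.eq_of_mem_vmap hu hua ▸ hx)) hwX
  · exact absurd hua ((D.vt_disj x a b c).notMem_of_mem_left hu)
  · exact absurd (D.imap_sub _ _ hua) not_emap


theorem adjClosed_emap {x y : W} (hx : x ∈ T) (hy : y ∈ T) :
    AdjClosed (removeVerts G (D.interfaceAt T)) (D.emap x y) := by
  rintro u w ⟨huw, huX, -⟩ hu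
  have not_imap : ∀ {a b}, u ∉ D.imap a b := fun hua => by
    refine huX (D.mem_interfaceAt hua ?_)
    rcases Sym2.eq_iff.1 (D.sym2_eq_of_mem_emap hu (D.imap_sub _ _ hua)) with
      ⟨rfl, -⟩ | ⟨rfl, -⟩
    exacts [hx, hy]
  rcases D.edge_rule u w trivial trivial huw with
    ⟨a, hua, -⟩ | ⟨a, b, hua, hwa⟩ | ⟨a, b, c, hua, -⟩ | ⟨a, b, c, -, -, hua, -⟩ |
    ⟨a, b, -, ⟨hua, -⟩ | ⟨-, hua⟩⟩ | ⟨a, b, c, ⟨hua, -⟩ | ⟨-, hua, -⟩⟩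
  · exact absurd hu ((D.ve_disj a x y).notMem_of_mem_left hua)
  · exact D.emap_eq_of_mem hu hua ▸ hwa
  · exact absurd hua ((D.et_disj x y a b c).notMem_of_mem_left hu)
  · exact absurd hua not_imap
  · exact absurd hua not_imap
  · exact absurd hu ((D.ve_disj a x y).notMem_of_mem_left hua)
  · exact absurd hua ((D.et_disj x y a b c).notMem_of_mem_left hu)
  · exact absurd hua not_imap

theorem adjClosed_tmap {x y z : W} (hT : AtLeastTwoIn T x y z) :
    AdjClosed (removeVerts G (D.interfaceAt T)) (D.tmap x y z) := by
  rintro u w ⟨huw, -, hwX⟩ hu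
  have not_emap : ∀ {a b}, u ∉ D.emap a b := fun hua =>
    (D.et_disj _ _ x y z).notMem_of_mem_left hua hu
  rcases D.edge_rule u w trivial trivial huw with
    ⟨a, hua, -⟩ | ⟨a, b, hua, -⟩ | ⟨a, b, c, hua, hwa⟩ | ⟨a, b, c, -, -, hua, -⟩ |
    ⟨a, b, -, ⟨hua, -⟩ | ⟨-, hua⟩⟩ | ⟨a, b, c, ⟨hua, hwab, hwba⟩ | ⟨-, hua, -⟩⟩
  · exact absurd hu ((D.vt_disj a x y z).notMem_of_mem_left hua)
  · exact absurd hua not_emap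
  · exact D.tmap_eq_of_mem hu hua ▸ hwa
  · exact absurd (D.imap_sub _ _ hua) not_emap
  · exact absurd (D.imap_sub _ _ hua) not_emap
  · exact absurd hu ((D.vt_disj a x y z).notMem_of_mem_left hua)
  · have habc : AtLeastTwoIn T a b c := (D.mem_preimg_iff_of_mem_tmap hua T).1
      ((D.mem_preimg_iff_of_mem_tmap hu T).2 hT)
    rcases habc.left_or_mid with ha | hb
    · exact absurd (D.mem_interfaceAt hwab ha) hwX
    · exact absurd (D.mem_interfaceAt hwba hb) hwX
  · exact absurd (D.imap_sub _ _ hua) not_emap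

theorem adjClosed_preimg {S : Set W}
    (hS : ∀ ⦃p q⦄, H.Adj p q → q ∈ S → p ∉ T → p ∈ S) :
    AdjClosed (removeVerts G (D.interfaceAt T)) (D.preimg S) := by
  rintro u w ⟨huw, huX, -⟩ hu
  have of_imap : ∀ {a b}, u ∈ D.imap a b → a ∈ S := fun {a b} hua => by
    have haT : a ∉ T := fun haT => huX (D.mem_interfaceAt hua haT)
    rcases (D.mem_preimg_iff_of_mem_emap (D.imap_sub a b hua) S).1 hu with ha | hb
    exacts [ha, hS (D.adj_of_mem_imap hua) hb haT]
  rcases D.edge_rule u w trivial trivial huw with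
    ⟨a, hua, hwa⟩ | ⟨a, b, hua, hwa⟩ | ⟨a, b, c, hua, hwa⟩ | ⟨a, b, c, -, -, hua, hwa⟩ |
    ⟨a, b, -, ⟨hua, hwa⟩ | ⟨hwa, hua⟩⟩ | ⟨a, b, c, ⟨hua, hwa, -⟩ | ⟨hwa, hua, hub⟩⟩
  · exact (D.mem_preimg_iff_of_mem_vmap hwa S).2 ((D.mem_preimg_iff_of_mem_vmap hua S).1 hu)
  · exact (D.mem_preimg_iff_of_mem_emap hwa S).2 ((D.mem_preimg_iff_of_mem_emap hua S).1 hu)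
  · exact (D.mem_preimg_iff_of_mem_tmap hwa S).2 ((D.mem_preimg_iff_of_mem_tmap hua S).1 hu)
  · exact (D.mem_preimg_iff_of_mem_emap (D.imap_sub _ _ hwa) S).2 (Or.inl (of_imap hua))
  · exact (D.mem_preimg_iff_of_mem_vmap hwa S).2 (of_imap hua)
  · exact (D.mem_preimg_iff_of_mem_emap (D.imap_sub _ _ hwa) S).2
      (Or.inl ((D.mem_preimg_iff_of_mem_vmap hua S).1 hu))
  · exact (D.mem_preimg_iff_of_mem_emap (D.imap_sub _ _ hwa) S).2
      ((D.mem_preimg_iff_of_mem_tmap hua S).1 hu).left_or_mid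
  · exact (D.mem_preimg_iff_of_mem_tmap hwa S).2 (Or.inl ⟨of_imap hua, of_imap hub⟩)

theorem mem_preimg_sdiff_or_mem_piece {A B : Set W} (hAB : IsSeparation H A B) (v : V) :
    v ∈ D.preimg (A \ B) ∨ v ∈ D.preimg (B \ A) ∨ (∃ x ∈ A ∩ B, v ∈ D.vmap x) ∨
      (∃ x y, x ∈ A ∩ B ∧ y ∈ A ∩ B ∧ v ∈ D.emap x y) ∨
      ∃ x y z, AtLeastTwoIn (A ∩ B) x y z ∧ v ∈ D.tmap x y z := by
  rcases D.cover v trivial with ⟨x, hv⟩ | ⟨x, y, hv⟩ | ⟨x, y, z, hv⟩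
  · simp only [D.mem_preimg_iff_of_mem_vmap hv]
    by_cases hx : x ∈ A ∩ B
    · exact Or.inr (Or.inr (Or.inl ⟨x, hx, hv⟩))
    · exact (hAB.mem_sdiff_or_mem_sdiff hx).imp_right Or.inl
  · simp only [D.mem_preimg_iff_of_mem_emap hv]
    by_cases hxy : x ∈ A ∩ B ∧ y ∈ A ∩ B
    · exact Or.inr (Or.inr (Or.inr (Or.inl ⟨x, y, hxy.1, hxy.2, hv⟩)))
    · rcases not_and_or.1 hxy with h | h <;>
        rcases hAB.mem_sdiff_or_mem_sdiff h with h | h <;> tauto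
  · simp only [D.mem_preimg_iff_of_mem_tmap hv]
    rcases atLeastTwoIn_or_atLeastTwoIn_compl (A ∩ B) x y z with h | h
    · exact Or.inr (Or.inr (Or.inr (Or.inr ⟨x, y, z, h, hv⟩)))
    · exact (hAB.atLeastTwoIn_sdiff_of_isTriangle (D.isTriangle_of_mem_tmap hv) h).imp_right
        Or.inl

end ExtStripDecomp

/-- Given an extended strip decomposition `(H, η)` of `G` and a separation `(A, B)` of the
host graph `H`, with `X = ⋃_{x ∈ A ∩ B} ⋃_{y ∈ N_H(x)} η(xy, x)`, every connected
component of `G - X` is contained in the preimage of `A \ B`, the preimage of `B \ A`,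
some `η(x)` with `x ∈ A ∩ B`, some `η(xy)` with `x, y ∈ A`, or some `η(xyz)` for a
triangle with at least two vertices in `A ∩ B`. -/
theorem components_after_host_separation {V W : Type*} (G : SimpleGraph V)
    (H : SimpleGraph W) (D : ExtStripDecomp G H Set.univ) (A B : Set W)
    (hcov : A ∪ B = Set.univ)
    (hsep : ∀ a ∈ A \ B, ∀ b ∈ B \ A, ¬ H.Adj a b)
    (X : Set V) (hX : X = {u : V | ∃ x ∈ A ∩ B, ∃ y, H.Adj x y ∧ u ∈ D.imap x y}) :
    ∀ v : V, v ∉ X →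
      ({u : V | (removeVerts G X).Reachable u v} ⊆ D.preimg (A \ B)) ∨
      ({u : V | (removeVerts G X).Reachable u v} ⊆ D.preimg (B \ A)) ∨
      (∃ x ∈ A ∩ B, {u : V | (removeVerts G X).Reachable u v} ⊆ D.vmap x) ∨
      (∃ x y, H.Adj x y ∧ x ∈ A ∧ y ∈ A ∧
        {u : V | (removeVerts G X).Reachable u v} ⊆ D.emap x y) ∨
      (∃ x y z, IsTriangle H x y z ∧
        ((x ∈ A ∩ B ∧ y ∈ A ∩ B) ∨ (x ∈ A ∩ B ∧ z ∈ A ∩ B) ∨ (y ∈ A ∩ B ∧ z ∈ A ∩ B)) ∧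
        {u : V | (removeVerts G X).Reachable u v} ⊆ D.tmap x y z) := by
  intro v _
  subst hX
  have hAB : IsSeparation H A B := ⟨hcov, hsep⟩
  rcases D.mem_preimg_sdiff_or_mem_piece hAB v with
    hv | hv | ⟨x, hx, hv⟩ | ⟨x, y, hx, hy, hv⟩ | ⟨x, y, z, hT, hv⟩
  · exact Or.inl ((D.adjClosed_preimg fun _ _ => hAB.mem_sdiff_of_adj).setOf_reachable_subset hv)
  · exact Or.inr (Or.inl
      ((D.adjClosed_preimg fun _ _ => hAB.mem_sdiff_of_adj').setOf_reachable_subset hv))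
  · exact Or.inr (Or.inr (Or.inl ⟨x, hx, (D.adjClosed_vmap hx).setOf_reachable_subset hv⟩))
  · exact Or.inr (Or.inr (Or.inr (Or.inl ⟨x, y, D.adj_of_mem_emap hv, hx.1, hy.1,
      (D.adjClosed_emap hx hy).setOf_reachable_subset hv⟩)))
  · exact Or.inr (Or.inr (Or.inr (Or.inr ⟨x, y, z, D.isTriangle_of_mem_tmap hv, hT,
      (D.adjClosed_tmap hT).setOf_reachable_subset hv⟩)))
end

section
/- Let G be a graph and let G* be an inclusion-minimal connected induced subgraph of G containing a given vertex set R. Let T* be a spanning tree of G*. Then every leaf of T* belongs to R. -/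
/-!
If a leaf `v` of the spanning tree `T*` were outside `R`, then `T* - v` would still be a
connected spanning subgraph of `G*` restricted to `S \ {v}`, so the induced subgraph on
`S \ {v}` would be connected and contain `R`, contradicting the minimality of `G*`.
-/

namespace SimpleGraph

variable {V : Type*} {G : SimpleGraph V}

lemma Connected.induce_image_val {s : Set V} {t : Set s}
    (h : ((G.induce s).induce t).Connected) : (G.induce (Subtype.val '' t)).Connected := by
  let f : (G.induce s).induce t →g G.induce (Subtype.val '' t) :=
    { toFun x := ⟨x.1.1, Set.mem_image_of_mem _ x.2⟩
      map_rel' h := h }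
  refine h.map f ?_
  rintro ⟨_, x, hx, rfl⟩
  exact ⟨⟨x, hx⟩, rfl⟩

lemma Connected.induce_diff_singleton_of_le_of_degree_eq_one {s : Set V} {T : SimpleGraph s}
    (hT : T.Connected) (hle : T ≤ G.induce s) {v : s} [Fintype (T.neighborSet v)]
    (hdeg : T.degree v = 1) : (G.induce (s \ {(v : V)})).Connected := by
  have hTv : (T.induce {v}ᶜ).Connected := hT.induce_compl_singleton_of_degree_eq_one hdeg
  have hGv : ((G.induce s).induce {v}ᶜ).Connected := hTv.mono fun _ _ h ↦ hle h
  have h := hGv.induce_image_val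
  rwa [Set.image_val_compl, Set.image_singleton] at h

end SimpleGraph

open scoped Classical

theorem spanning_tree_leaves_in_R_general {V : Type*} [Fintype V]
    (G : SimpleGraph V) (R S : Set V) (hRS : R ⊆ S)
    (hmin : ∀ S' : Set V, S' ⊆ S → R ⊆ S' → (G.induce S').Connected → S' = S)
    (T : SimpleGraph ↥S) [DecidableRel T.Adj]
    (hsub : T ≤ G.induce S) (htree : T.IsTree) :
    ∀ v : ↥S, T.degree v = 1 → (v : V) ∈ R := by
  intro v hdeg
  by_contra hvR
  have hconn : (G.induce (S \ {(v : V)})).Connected :=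
    htree.connected.induce_diff_singleton_of_le_of_degree_eq_one hsub hdeg
  have hS : S \ {(v : V)} = S :=
    hmin _ Set.sdiff_subset (Set.subset_sdiff_singleton hRS hvR) hconn
  exact (Set.sdiff_singleton_ssubset.mpr v.2).ne hS

/-- Let `G*` (induced on the vertex set `S`) be an inclusion-minimal connected induced
subgraph of `G` containing a vertex set `R`, and `T` a spanning tree of `G*`.  Then every
leaf of `T` belongs to `R`. -/
theorem spanning_tree_leaves_in_R {V : Type*} [Fintype V]
    (G : SimpleGraph V) (R S : Set V) (hRS : R ⊆ S)
    (hconn : (G.induce S).Connected)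
    (hmin : ∀ S' : Set V, S' ⊆ S → R ⊆ S' → (G.induce S').Connected → S' = S)
    (T : SimpleGraph ↥S) [DecidableRel T.Adj]
    (hsub : T ≤ G.induce S) (htree : T.IsTree) :
    ∀ v : ↥S, T.degree v = 1 → (v : V) ∈ R :=
  spanning_tree_leaves_in_R_general G R S hRS hmin T hsub htree
end
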